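/- Let G be connected with weighted Laplacian B and let M ⊆ N be a nonempty set of measured buses. Then, for every choice of strictly positive edge weights, there exists no unobservable attack whose support is contained in M; equivalently, there is no Δθ ≠ 0 with Δθ_i = 0 for all i ∈ M and (B·Δθ)_i = 0 for all i ∈ M^c. -/
import Mathlib


open Matrix

/-- The incidence vector `m_e ∈ ℝ^n` of the pair of vertices `(i, j)`:
`m_e(i) = 1`, `m_e(j) = -1`, `0` elsewhere. -/
def incVec {n : ℕ} (i j : Fin n) : Fin n → ℝ :=
  fun a => if a = i then 1 else if a = j then -1 else 0

/-- The rank-one matrix `m_e m_eᵀ`, which is well defined on unordered pairs. -/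
def edgeOuter {n : ℕ} : Sym2 (Fin n) → Matrix (Fin n) (Fin n) ℝ :=
  Sym2.lift ⟨fun i j => vecMulVec (incVec i j) (incVec i j), by
    intro i j
    ext a b
    simp only [vecMulVec_apply, incVec]
    split_ifs <;> simp_all⟩

/-- The weighted Laplacian `B = Σ_{e ∈ L} w_e · m_e m_eᵀ` of the graph `G`
with edge weights `w`. -/
noncomputable def lap {n : ℕ} (G : SimpleGraph (Fin n)) [DecidableRel G.Adj]
    (w : Sym2 (Fin n) → ℝ) : Matrix (Fin n) (Fin n) ℝ :=
  ∑ e ∈ G.edgeFinset, w e • edgeOuter e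

/-- `ΔP` is an unobservable attack w.r.t. the Laplacian `B` and measured buses `M`:
`ΔP ≠ 0`, and `ΔP = B·Δθ` for some `Δθ` vanishing on `M`. -/
def Unobservable {n : ℕ} (B : Matrix (Fin n) (Fin n) ℝ) (M : Finset (Fin n))
    (ΔP : Fin n → ℝ) : Prop :=
  ΔP ≠ 0 ∧ ∃ Δθ : Fin n → ℝ, ΔP = B.mulVec Δθ ∧ ∀ i ∈ M, Δθ i = 0

/-- `‖v‖₀`: the number of nonzero entries of `v`. -/
noncomputable def sparsity {n : ℕ} (v : Fin n → ℝ) : ℕ := (Function.support v).ncard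

/-- The open neighborhood `N(S) = {j ∉ S : j adjacent to some vertex of S}`. -/
def nbhd {n : ℕ} (G : SimpleGraph (Fin n)) [DecidableRel G.Adj] (S : Finset (Fin n)) :
    Finset (Fin n) :=
  Finset.univ.filter fun j => j ∉ S ∧ ∃ i ∈ S, G.Adj j i

/-- The closed neighborhood `N[S] = S ∪ N(S)`. -/
def closedNbhd {n : ℕ} (G : SimpleGraph (Fin n)) [DecidableRel G.Adj] (S : Finset (Fin n)) :
    Finset (Fin n) :=
  S ∪ nbhd G S

/-- `S` is a vulnerable set: a nonempty `S ⊆ Mᶜ` such that the number of alterable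
buses in `N[S]` is at least `|N(S)| + 1` (i.e. `N(S)` is a vulnerable vertex cut of
the augmented graph `G^M`). -/
def VulnerableSet {n : ℕ} (G : SimpleGraph (Fin n)) [DecidableRel G.Adj]
    (M U S : Finset (Fin n)) : Prop :=
  S.Nonempty ∧ S ⊆ Mᶜ ∧ (nbhd G S).card + 1 ≤ (Uᶜ ∩ closedNbhd G S).card


/-- Auxiliary: dot product of an incidence vector with a vector. -/
lemma incVec_dot {n : ℕ} {i j : Fin n} (hij : i ≠ j) (θ : Fin n → ℝ) :
    incVec i j ⬝ᵥ θ = θ i - θ j := by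
  unfold dotProduct incVec
  have h : ∀ a : Fin n, (if a = i then (1:ℝ) else if a = j then -1 else 0) * θ a
      = (if a = i then θ a else 0) + (if a = j then -θ a else 0) := by
    intro a
    split_ifs with h1 h2 <;> simp_all
  simp only [h, Finset.sum_add_distrib, Finset.sum_ite_eq', Finset.mem_univ, if_true]
  ring

/-- The quadratic form of one edge. -/
noncomputable def edgeQuad {n : ℕ} (θ : Fin n → ℝ) : Sym2 (Fin n) → ℝ :=
  Sym2.lift ⟨fun i j => (θ i - θ j)^2, by intro i j; ring⟩

lemma dot_edgeOuter {n : ℕ} (θ : Fin n → ℝ) (e : Sym2 (Fin n)) (he : ¬ e.IsDiag) :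
    θ ⬝ᵥ (edgeOuter e).mulVec θ = edgeQuad θ e := by
  induction e using Sym2.ind with
  | _ i j =>
    have hij : i ≠ j := by simpa using he
    have h1 : edgeOuter (s(i,j)) = vecMulVec (incVec i j) (incVec i j) := by
      simp [edgeOuter]
    rw [h1]
    have h2 : (vecMulVec (incVec i j) (incVec i j)).mulVec θ
        = fun a => incVec i j a * (incVec i j ⬝ᵥ θ) := by
      ext a
      simp [mulVec, vecMulVec, dotProduct, Finset.mul_sum, mul_assoc]
    rw [h2]
    have h3 : θ ⬝ᵥ (fun a => incVec i j a * (incVec i j ⬝ᵥ θ))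
        = (θ ⬝ᵥ incVec i j) * (incVec i j ⬝ᵥ θ) := by
      simp [dotProduct, Finset.sum_mul, mul_assoc, mul_comm, mul_left_comm]
    rw [h3, dotProduct_comm, incVec_dot hij]
    simp [edgeQuad]
    ring

lemma dot_lap {n : ℕ} (G : SimpleGraph (Fin n)) [DecidableRel G.Adj]
    (w : Sym2 (Fin n) → ℝ) (θ : Fin n → ℝ) :
    θ ⬝ᵥ (lap G w).mulVec θ = ∑ e ∈ G.edgeFinset, w e * edgeQuad θ e := by
  unfold lap
  have hsum : (∑ e ∈ G.edgeFinset, w e • edgeOuter e) *ᵥ θ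
      = ∑ e ∈ G.edgeFinset, (w e • edgeOuter e) *ᵥ θ := by
    ext i
    simp only [mulVec, dotProduct, Finset.sum_apply, Matrix.sum_apply, Finset.sum_mul]
    rw [Finset.sum_comm]
  have hd : θ ⬝ᵥ (∑ e ∈ G.edgeFinset, (w e • edgeOuter e) *ᵥ θ)
      = ∑ e ∈ G.edgeFinset, θ ⬝ᵥ ((w e • edgeOuter e) *ᵥ θ) := by
    simp only [dotProduct, Finset.sum_apply, Finset.mul_sum]
    rw [Finset.sum_comm]
  rw [hsum, hd]
  refine Finset.sum_congr rfl fun e he => ?_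
  have hnd : ¬ e.IsDiag := G.not_isDiag_of_mem_edgeSet (by simpa using he)
  rw [Matrix.smul_mulVec, dotProduct_smul, dot_edgeOuter θ e hnd]
  simp

lemma theta_eq_zero {n : ℕ}
    (G : SimpleGraph (Fin n)) [DecidableRel G.Adj] (hG : G.Connected)
    (w : Sym2 (Fin n) → ℝ) (hw : ∀ e ∈ G.edgeSet, 0 < w e)
    (M : Finset (Fin n)) (hM : M.Nonempty) (Δθ : Fin n → ℝ)
    (h0 : ∀ i ∈ M, Δθ i = 0) (h1 : ∀ i ∈ Mᶜ, (lap G w).mulVec Δθ i = 0) :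
    Δθ = 0 := by
  have hq : Δθ ⬝ᵥ (lap G w).mulVec Δθ = 0 := by
    unfold dotProduct
    refine Finset.sum_eq_zero fun i _ => ?_
    by_cases hi : i ∈ M
    · rw [h0 i hi, zero_mul]
    · rw [h1 i (Finset.mem_compl.mpr hi), mul_zero]
  rw [dot_lap] at hq
  have hterm : ∀ e ∈ G.edgeFinset, w e * edgeQuad Δθ e = 0 := by
    refine (Finset.sum_eq_zero_iff_of_nonneg fun e he => ?_).mp hq
    have hws := hw e (by simpa using he)
    have hq0 : 0 ≤ edgeQuad Δθ e := by
      induction e using Sym2.ind with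
      | _ i j => simp only [edgeQuad, Sym2.lift_mk]; positivity
    positivity
  have hadj : ∀ i j : Fin n, G.Adj i j → Δθ i = Δθ j := by
    intro i j hij
    have he : s(i,j) ∈ G.edgeFinset := by
      simpa [SimpleGraph.mem_edgeFinset] using hij
    have := hterm _ he
    have hws := hw s(i,j) (by simpa using hij)
    have hq0 : edgeQuad Δθ s(i,j) = 0 := by
      rcases mul_eq_zero.mp this with h | h
      · exact absurd h (ne_of_gt hws)
      · exact h
    have : (Δθ i - Δθ j)^2 = 0 := by simpa [edgeQuad] using hq0
    have := pow_eq_zero_iff (n := 2) (by norm_num) |>.mp this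
    linarith
  have hconst : ∀ i j : Fin n, Δθ i = Δθ j := by
    intro i j
    obtain ⟨p⟩ := hG.preconnected i j
    induction p with
    | nil => rfl
    | cons h p ih => exact (hadj _ _ h).trans ih
  obtain ⟨m, hm⟩ := hM
  funext i
  exact (hconst i m).trans (h0 m hm)

/-- For a connected graph with strictly positive edge weights
and a nonempty set `M` of measured buses, there is no unobservable attack whose
support is contained in `M`; equivalently, there is no `Δθ ≠ 0` vanishing on `M`
with `(B·Δθ)_i = 0` for all `i ∈ Mᶜ`. -/
theorem no_unobservable_attack_supported_on_measured {n : ℕ} (hn : 2 ≤ n)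
    (G : SimpleGraph (Fin n)) [DecidableRel G.Adj] (hG : G.Connected)
    (w : Sym2 (Fin n) → ℝ) (hw : ∀ e ∈ G.edgeSet, 0 < w e)
    (M : Finset (Fin n)) (hM : M.Nonempty) :
    (¬ ∃ ΔP : Fin n → ℝ, Unobservable (lap G w) M ΔP ∧ ∀ i ∉ M, ΔP i = 0) ∧
      ¬ ∃ Δθ : Fin n → ℝ, Δθ ≠ 0 ∧ (∀ i ∈ M, Δθ i = 0) ∧
          ∀ i ∈ Mᶜ, (lap G w).mulVec Δθ i = 0 := by
  constructor
  · rintro ⟨ΔP, ⟨hP0, Δθ, hPB, hθM⟩, hPsupp⟩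
    have hθ0 : Δθ = 0 := by
      refine theta_eq_zero G hG w hw M hM Δθ hθM fun i hi => ?_
      rw [← hPB]
      exact hPsupp i (Finset.mem_compl.mp hi)
    apply hP0
    rw [hPB, hθ0]
    simp [Matrix.mulVec_zero]
  · rintro ⟨Δθ, hne, hθM, hBθ⟩
    exact hne (theta_eq_zero G hG w hw M hM Δθ hθM hBθ)
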